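/- Assume that (α, α^q, α^(q^2)) is a linearly independent family over K. Then the four polynomials F, G, H, T are linearly independent over L in MvPolynomial (Fin 3) L. -/

import Mathlib

open MvPolynomial

/-!
The coefficient matrix of `x', y', z'` is `(φ^i (b j))` for the Frobenius `φ : x ↦ x^q` of `L/K`
and the `K`-basis `b = (α, α^q, α^(q²))`. Since `1, φ, φ²` are distinct characters, Dedekind's
independence theorem makes its rows independent, so the matrix is invertible. The inverse linear
substitution is an `L`-algebra endomorphism of `L[x, y, z]` sending `x', y', z'` to `x, y, z`, hence
`F, G, H, T` to the distinct monomials `x²y, y²z, z²x, xyz`.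
-/

/-- The linear form x' = α•x + α^q•y + α^(q²)•z. -/
noncomputable def xLin (L : Type*) [CommRing L] (q : ℕ) (α : L) : MvPolynomial (Fin 3) L :=
  α • X 0 + α ^ q • X 1 + α ^ q ^ 2 • X 2

/-- The linear form y' = α^q•x + α^(q²)•y + α•z. -/
noncomputable def yLin (L : Type*) [CommRing L] (q : ℕ) (α : L) : MvPolynomial (Fin 3) L :=
  α ^ q • X 0 + α ^ q ^ 2 • X 1 + α • X 2

/-- The linear form z' = α^(q²)•x + α•y + α^q•z. -/
noncomputable def zLin (L : Type*) [CommRing L] (q : ℕ) (α : L) : MvPolynomial (Fin 3) L :=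
  α ^ q ^ 2 • X 0 + α • X 1 + α ^ q • X 2

/-- F = x'² * y'. -/
noncomputable def Fcub (L : Type*) [CommRing L] (q : ℕ) (α : L) : MvPolynomial (Fin 3) L :=
  xLin L q α ^ 2 * yLin L q α

/-- G = y'² * z'. -/
noncomputable def Gcub (L : Type*) [CommRing L] (q : ℕ) (α : L) : MvPolynomial (Fin 3) L :=
  yLin L q α ^ 2 * zLin L q α

/-- H = z'² * x'. -/
noncomputable def Hcub (L : Type*) [CommRing L] (q : ℕ) (α : L) : MvPolynomial (Fin 3) L :=
  zLin L q α ^ 2 * xLin L q α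

/-- T = x' * y' * z'. -/
noncomputable def Tcub (L : Type*) [CommRing L] (q : ℕ) (α : L) : MvPolynomial (Fin 3) L :=
  xLin L q α * yLin L q α * zLin L q α

theorem isUnit_of_algHom_apply_basis {K L ι : Type*} [Field K] [Field L] [Algebra K L]
    [Fintype ι] [DecidableEq ι] (b : Module.Basis ι K L) {σ : ι → L →ₐ[K] L}
    (hσ : Function.Injective σ) : IsUnit (Matrix.of fun i j => σ i (b j)) := by
  rw [← Matrix.linearIndependent_rows_iff_isUnit]
  exact ((linearIndependent_toLinearMap K L L).comp σ hσ).map' _ (b.constr L).symm.ker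

namespace MvPolynomial

theorem exists_algHom_sum_smul_X_eq_X {R σ : Type*} [CommRing R] [Fintype σ] [DecidableEq σ]
    {M : Matrix σ σ R} (hM : IsUnit M) :
    ∃ Φ : MvPolynomial σ R →ₐ[R] MvPolynomial σ R, ∀ i, Φ (∑ j, M i j • X j) = X i := by
  refine ⟨aeval fun j => ∑ k, M⁻¹ j k • X k, fun i => ?_⟩
  have hMN : M * M⁻¹ = 1 := Matrix.mul_nonsing_inv M ((Matrix.isUnit_iff_isUnit_det M).mp hM)
  calc aeval (fun j => ∑ k, M⁻¹ j k • X k) (∑ j, M i j • X j)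
      = ∑ k, (M * M⁻¹) i k • (X k : MvPolynomial σ R) := by
        simp only [map_sum, map_smul, aeval_X, Finset.smul_sum, smul_smul, Matrix.mul_apply,
          Finset.sum_smul]
        exact Finset.sum_comm
    _ = X i := by simp [hMN, Matrix.one_apply]

theorem linearIndependent_prod_X_pow {R σ ι : Type*} [CommRing R] [Fintype σ]
    {e : ι → σ → ℕ} (he : Function.Injective e) :
    LinearIndependent R fun i => ∏ j, (X j : MvPolynomial σ R) ^ e i j := by
  have hmon : ∀ i, ∏ j, (X j : MvPolynomial σ R) ^ e i j =
      monomial (Finsupp.equivFunOnFinite.symm (e i)) 1 := fun i => by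
    classical
    rw [prod_X_pow]
    exact congrArg (monomial · 1) (Finsupp.ext fun j => by simp)
  simp only [hmon]
  exact (basisMonomials σ R).linearIndependent.comp _
    (Finsupp.equivFunOnFinite.symm.injective.comp he)

theorem linearIndependent_cubicMonomials (R : Type*) [CommRing R] :
    LinearIndependent R ![(X 0 : MvPolynomial (Fin 3) R) ^ 2 * X 1, X 1 ^ 2 * X 2,
      X 2 ^ 2 * X 0, X 0 * X 1 * X 2] := by
  have he : Function.Injective ![![2, 1, 0], ![0, 2, 1], ![1, 0, 2], (![1, 1, 1] : Fin 3 → ℕ)] := by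
    decide
  convert linearIndependent_prod_X_pow (R := R) he using 1
  ext i : 1
  fin_cases i <;> simp [Fin.prod_univ_three, mul_comm]

end MvPolynomial

theorem isUnit_frobeniusMatrix {K L : Type*} [Field K] [Fintype K] [Field L] [Fintype L]
    [Algebra K L] (hrank : Module.finrank K L = 3) {α : L}
    (hli : LinearIndependent K ![α, α ^ Fintype.card K, α ^ Fintype.card K ^ 2]) :
    IsUnit !![α, α ^ Fintype.card K, α ^ Fintype.card K ^ 2;
      α ^ Fintype.card K, α ^ Fintype.card K ^ 2, α;
      α ^ Fintype.card K ^ 2, α, α ^ Fintype.card K] := by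
  have hφ : Function.Injective fun i : Fin 3 => FiniteField.frobeniusAlgHom K L ^ (i : ℕ) :=
    (FiniteField.bijective_frobeniusAlgHom_pow K L).injective.comp (Fin.cast_injective hrank.symm)
  have hα3 : α ^ Fintype.card K ^ 3 = α := by
    rw [← hrank, ← Module.card_eq_pow_finrank]
    exact FiniteField.pow_card α
  have hα4 : α ^ Fintype.card K ^ 4 = α ^ Fintype.card K := by rw [pow_succ, pow_mul, hα3]
  let b := basisOfLinearIndependentOfCardEqFinrank hli (by simp [hrank])
  convert isUnit_of_algHom_apply_basis b hφ using 1
  ext i j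
  fin_cases i <;> fin_cases j <;>
    simp [b, AlgHom.coe_pow, FiniteField.coe_frobeniusAlgHom, pow_iterate, ← pow_mul] <;>
    ring_nf <;> simp [hα3, hα4]

theorem stmt_8 (K L : Type*) [Field K] [Fintype K] [Field L] [Fintype L] [Algebra K L]
    (hrank : Module.finrank K L = 3) (α : L)
    (hli : LinearIndependent K ![α, α ^ Fintype.card K, α ^ Fintype.card K ^ 2]) :
    LinearIndependent L ![Fcub L (Fintype.card K) α, Gcub L (Fintype.card K) α,
      Hcub L (Fintype.card K) α, Tcub L (Fintype.card K) α] := by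
  obtain ⟨Φ, hΦ⟩ := exists_algHom_sum_smul_X_eq_X (isUnit_frobeniusMatrix hrank hli)
  have hx : Φ (xLin L (Fintype.card K) α) = X 0 := by
    rw [← hΦ 0]; congr 1; simp [xLin, Fin.sum_univ_three]
  have hy : Φ (yLin L (Fintype.card K) α) = X 1 := by
    rw [← hΦ 1]; congr 1; simp [yLin, Fin.sum_univ_three]
  have hz : Φ (zLin L (Fintype.card K) α) = X 2 := by
    rw [← hΦ 2]; congr 1; simp [zLin, Fin.sum_univ_three]
  have hcomp : Φ.toLinearMap ∘ ![Fcub L (Fintype.card K) α, Gcub L (Fintype.card K) α,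
      Hcub L (Fintype.card K) α, Tcub L (Fintype.card K) α] =
      ![X 0 ^ 2 * X 1, X 1 ^ 2 * X 2, X 2 ^ 2 * X 0, X 0 * X 1 * X 2] := by
    ext i : 1
    fin_cases i <;> simp [Fcub, Gcub, Hcub, Tcub, hx, hy, hz]
  exact .of_comp Φ.toLinearMap (by rw [hcomp]; exact linearIndependent_cubicMonomials L)
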